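/- Let G be a finite abelian group, ι ∈ G of order 2, and Φ ⊆ G a CM-type with indicator function φ. Suppose for every character χ of G with χ(ι) = -1 we have ∑_{σ∈Φ} χ(σ) ≠ 0. Then any function g : G → ℚ satisfying ∑_{σ∈G} φ(τ^{-1}σ) g(σ) = 0 for all τ ∈ G must satisfy g = ι·g and ∑_{σ∈G} g(σ) = 0, where (ι·g)(σ) = g(ισ). -/
import Mathlib


open Finset

section aux

variable {G : Type*} [CommGroup G] [Fintype G] [DecidableEq G]

private lemma aux_orth [Fintype (G →* ℂˣ)] [HasEnoughRootsOfUnity ℂ (Monoid.exponent G)]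
    {a : G} (ha : a ≠ 1) : ∑ χ : G →* ℂˣ, (χ a : ℂ) = 0 := by
  obtain ⟨χ₀, hχ₀⟩ := CommGroup.exists_apply_ne_one_of_hasEnoughRootsOfUnity G ℂ ha
  have hχ₀' : (χ₀ a : ℂ) ≠ 1 := by
    simpa only [Ne, Units.val_eq_one] using hχ₀
  refine eq_zero_of_mul_eq_self_left hχ₀' ?_
  rw [Finset.mul_sum]
  have : ∀ χ : G →* ℂˣ, (χ₀ a : ℂ) * (χ a : ℂ) = ((χ₀ * χ) a : ℂ) := by
    intro χ; simp [Units.val_mul]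
  simp_rw [this]
  exact Fintype.sum_bijective _ (Group.mulLeft_bijective χ₀) _ _ fun χ ↦ rfl

private lemma aux_four [Fintype (G →* ℂˣ)] [HasEnoughRootsOfUnity ℂ (Monoid.exponent G)]
    (f : G → ℂ) (hf : ∀ χ : G →* ℂˣ, ∑ σ : G, (χ σ : ℂ) * f σ = 0) : ∀ τ, f τ = 0 := by
  intro τ
  have key : ∑ σ : G, (∑ χ : G →* ℂˣ, (χ (τ⁻¹ * σ) : ℂ)) * f σ = 0 := by
    simp_rw [Finset.sum_mul]
    rw [Finset.sum_comm]
    have h1 : ∀ (χ : G →* ℂˣ) (σ : G), (χ (τ⁻¹ * σ) : ℂ) * f σ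
        = (χ τ⁻¹ : ℂ) * ((χ σ : ℂ) * f σ) := by
      intro χ σ; rw [map_mul, Units.val_mul, mul_assoc]
    simp_rw [h1, ← Finset.mul_sum, hf, mul_zero, Finset.sum_const_zero]
  have key2 : ∑ σ : G, (∑ χ : G →* ℂˣ, (χ (τ⁻¹ * σ) : ℂ)) * f σ
      = (Fintype.card (G →* ℂˣ) : ℂ) * f τ := by
    rw [Finset.sum_eq_single τ]
    · simp
    · intro σ _ hστ
      rw [aux_orth (by simpa [inv_mul_eq_one] using (Ne.symm hστ)), zero_mul]
    · simp
  rw [key2] at key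
  have hcard : (Fintype.card (G →* ℂˣ) : ℂ) ≠ 0 := by
    exact_mod_cast Fintype.card_ne_zero
  exact (mul_eq_zero.mp key).resolve_left hcard

end aux

/-- If all odd character sums over the CM-type `Φ` are nonzero
(nondegeneracy), then any `g : G → ℚ` killed by convolution with the indicator `φ` of
`Φ` (i.e. `∑_σ φ(τ⁻¹σ) g(σ) = 0` for all `τ`) satisfies the Lefschetz relations:
`g = ι·g` and `∑_σ g(σ) = 0`. -/
theorem stmt_19 {G : Type*} [CommGroup G] [Fintype G] [DecidableEq G]
    (ι : G) (hι : orderOf ι = 2) (Φ : Finset G)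
    (hcover : Φ ∪ Φ.image (fun σ => ι * σ) = Finset.univ)
    (hdisj : Φ ∩ Φ.image (fun σ => ι * σ) = ∅)
    (φ : G → ℚ) (hφ : ∀ σ, φ σ = if σ ∈ Φ then 1 else 0)
    (hnd : ∀ χ : G →* ℂˣ, (χ ι : ℂ) = -1 → (∑ σ ∈ Φ, (χ σ : ℂ)) ≠ 0)
    (g : G → ℚ) (hg : ∀ τ : G, ∑ σ : G, φ (τ⁻¹ * σ) * g σ = 0) :
    (∀ σ : G, g (ι * σ) = g σ) ∧ ∑ σ : G, g σ = 0 := by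
  classical
  -- instances
  haveI : NeZero ((Monoid.exponent G : ℂ)) :=
    ⟨Nat.cast_ne_zero.mpr Monoid.exponent_ne_zero_of_finite⟩
  haveI : Finite (G →* ℂˣ) :=
    Finite.of_equiv G (CommGroup.monoidHom_mulEquiv_of_hasEnoughRootsOfUnity G ℂ).some.symm.toEquiv
  haveI : Fintype (G →* ℂˣ) := Fintype.ofFinite _
  -- basic facts
  have hι1 : ι * ι = 1 := by
    have h := pow_orderOf_eq_one ι
    rw [hι, pow_two] at h
    exact h
  have hΦne : Φ.Nonempty := by
    rcases Φ.eq_empty_or_nonempty with h | h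
    · exfalso
      have : (Finset.univ : Finset G) = ∅ := by
        rw [← hcover, h]; simp
      exact absurd (Finset.mem_univ (1 : G)) (by rw [this]; exact Finset.notMem_empty _)
    · exact h
  -- part 2 : sum of g is zero
  have hcount : ∀ σ : G, ∑ τ : G, φ (τ⁻¹ * σ) = (Φ.card : ℚ) := by
    intro σ
    have := Fintype.sum_equiv ((Equiv.inv G).trans (Equiv.mulLeft σ))
      (fun ρ => φ ρ) (fun τ => φ (τ⁻¹ * σ)) ?_
    · rw [← this]
      simp [hφ]
    · intro ρ
      simp only [Equiv.trans_apply, Equiv.inv_apply, Equiv.coe_mulLeft]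
      congr 1
      group
  have hsum : ∑ σ : G, g σ = 0 := by
    have h0 : ∑ τ : G, ∑ σ : G, φ (τ⁻¹ * σ) * g σ = 0 := by
      simp [hg]
    rw [Finset.sum_comm] at h0
    simp_rw [← Finset.sum_mul, hcount, ← Finset.mul_sum] at h0
    have hc : (Φ.card : ℚ) ≠ 0 := by
      exact_mod_cast Finset.card_ne_zero_of_mem hΦne.choose_spec
    exact (mul_eq_zero.mp h0).resolve_left hc
  -- part 1 : odd Fourier coefficients vanish, hence g = ι·g
  set f : G → ℂ := fun σ => ((g σ : ℂ)) - ((g (ι * σ) : ℂ)) with hf_def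
  have hgC : ∀ τ : G, ∑ σ : G, ((φ (τ⁻¹ * σ) : ℚ) : ℂ) * (g σ : ℂ) = 0 := by
    intro τ; exact_mod_cast congrArg (fun q : ℚ => (q : ℂ)) (hg τ)
  have hfχ : ∀ χ : G →* ℂˣ, ∑ σ : G, (χ σ : ℂ) * f σ = 0 := by
    intro χ
    have hsq : (χ ι : ℂ) ^ 2 = 1 := by
      rw [← Units.val_pow_eq_pow_val, ← map_pow, pow_two, hι1, map_one, Units.val_one]
    have hsplit : ∑ σ : G, (χ σ : ℂ) * f σ
        = (1 - (χ ι : ℂ)) * ∑ σ : G, (χ σ : ℂ) * (g σ : ℂ) := by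
      simp only [hf_def, mul_sub, Finset.sum_sub_distrib]
      have hrein : ∑ σ : G, (χ σ : ℂ) * (g (ι * σ) : ℂ)
          = (χ ι : ℂ) * ∑ σ : G, (χ σ : ℂ) * (g σ : ℂ) := by
        rw [Finset.mul_sum]
        refine Fintype.sum_equiv (Equiv.mulLeft ι)
          (fun σ => (χ σ : ℂ) * (g (ι * σ) : ℂ))
          (fun σ => (χ ι : ℂ) * ((χ σ : ℂ) * (g σ : ℂ))) ?_
        intro σ
        simp only [Equiv.coe_mulLeft, ← mul_assoc, hι1, one_mul, map_mul, Units.val_mul]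
        ring_nf
        rw [hsq, mul_one]
      rw [hrein]; ring
    rw [hsplit]
    -- χ ι is ±1
    have hpm : (χ ι : ℂ) = 1 ∨ (χ ι : ℂ) = -1 := by
      have h : ((χ ι : ℂ) - 1) * ((χ ι : ℂ) + 1) = 0 := by linear_combination hsq
      rcases mul_eq_zero.mp h with h | h
      · exact Or.inl (sub_eq_zero.mp h)
      · exact Or.inr (eq_neg_of_add_eq_zero_left h)
    rcases hpm with h1 | h1
    · rw [h1]; ring
    · -- odd character: the Fourier coefficient of g vanishes
      have hodd : ((χ⁻¹ : G →* ℂˣ) ι : ℂ) = -1 := by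
        have hh : ((χ⁻¹ : G →* ℂˣ) ι : ℂ) = ((χ ι : ℂ))⁻¹ := by
          simp [Units.val_inv_eq_inv_val]
        rw [hh, h1]; norm_num
      have hA := hnd χ⁻¹ hodd
      -- compute: 0 = A * ĝ(χ)
      have h0 : ∑ τ : G, (χ τ : ℂ) * ∑ σ : G, ((φ (τ⁻¹ * σ) : ℚ) : ℂ) * (g σ : ℂ) = 0 := by
        simp [hgC]
      simp_rw [Finset.mul_sum] at h0
      rw [Finset.sum_comm] at h0
      have hinner : ∀ σ : G, ∑ τ : G, (χ τ : ℂ) * (((φ (τ⁻¹ * σ) : ℚ) : ℂ) * (g σ : ℂ))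
          = (∑ ρ ∈ Φ, ((χ⁻¹ : G →* ℂˣ) ρ : ℂ)) * ((χ σ : ℂ) * (g σ : ℂ)) := by
        intro σ
        have := Fintype.sum_equiv ((Equiv.inv G).trans (Equiv.mulLeft σ))
          (fun ρ => (χ (σ * ρ⁻¹) : ℂ) * (((φ ρ : ℚ) : ℂ) * (g σ : ℂ)))
          (fun τ => (χ τ : ℂ) * (((φ (τ⁻¹ * σ) : ℚ) : ℂ) * (g σ : ℂ))) ?_
        · rw [← this]
          rw [Finset.sum_mul]
          rw [← Finset.sum_subset (Finset.subset_univ Φ)]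
          · refine Finset.sum_congr rfl fun ρ hρ => ?_
            rw [hφ ρ, if_pos hρ]
            rw [map_mul, Units.val_mul, map_inv, Units.val_inv_eq_inv_val]
            have : ((χ⁻¹ : G →* ℂˣ) ρ : ℂ) = ((χ ρ : ℂ))⁻¹ := by
              simp [Units.val_inv_eq_inv_val]
            rw [this]
            push_cast
            ring
          · intro ρ _ hρ
            rw [hφ ρ, if_neg hρ]
            push_cast
            ring
        · intro ρ
          simp only [Equiv.trans_apply, Equiv.inv_apply, Equiv.coe_mulLeft]
          have h2 : (σ * ρ⁻¹)⁻¹ * σ = ρ := by group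
          rw [h2]
      simp_rw [hinner, ← Finset.mul_sum] at h0
      have := (mul_eq_zero.mp h0).resolve_left hA
      rw [this]; ring
  have hfz := aux_four f hfχ
  refine ⟨fun σ => ?_, hsum⟩
  have := hfz σ
  rw [hf_def] at this
  have : ((g σ : ℂ)) = ((g (ι * σ) : ℂ)) := by
    have h := sub_eq_zero.mp this
    exact h
  exact_mod_cast this.symm
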